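/- arXiv:2511.02312 — 3 statements merged into one kernel-verified Lean document; each statement's English description precedes it below -/
import Mathlib

section
/- Let t ≥ 1 and let a = (a_1, …, a_t) be a vector of nonnegative integers, and set p(a; q) := ∏_{i=1}^{t} (1 + q + ⋯ + q^{a_i}) = ∑_{k=0}^{|a|} c_k(a) q^k, where |a| := a_1 + ⋯ + a_t. Then p(a; q) is symmetric (c_k(a) = c_{|a|−k}(a)) and unimodal, and for every integer k with 0 ≤ k ≤ |a|/2, c_k(a) − c_{k−1}(a) equals the number of integer tuples (k_1, …, k_t) ∈ ℤ^t satisfying 0 = k_1 ≤ k_2 ≤ ⋯ ≤ k_t = k and k_{i+1} − k_i ≤ min(a_1 + ⋯ + a_i − 2k_i, a_{i+1}) for all 1 ≤ i ≤ t−1 (with the convention c_{−1}(a) = 0). -/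
open Polynomial

/-- `[a+1]_q = 1 + q + ⋯ + q^a`. -/
noncomputable def qint (a : ℕ) : Polynomial ℚ := ∑ i ∈ Finset.range (a + 1), (X : Polynomial ℚ) ^ i

noncomputable def PP (a : List ℕ) : Polynomial ℚ := (a.map qint).prod

lemma qint_coeff (b n : ℕ) : (qint b).coeff n = if n ≤ b then 1 else 0 := by
  simp only [qint, finset_sum_coeff, coeff_X_pow]
  rw [Finset.sum_ite_eq (Finset.range (b+1)) n (fun _ => (1:ℚ))]
  simp [Nat.lt_succ_iff]

lemma qint_natDegree (b : ℕ) : (qint b).natDegree = b := by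
  apply le_antisymm
  · apply Polynomial.natDegree_sum_le_of_forall_le
    intro i hi
    simpa [natDegree_X_pow] using Nat.lt_succ_iff.mp (Finset.mem_range.mp hi)
  · apply le_natDegree_of_ne_zero
    rw [qint_coeff]; simp

lemma qint_monic (b : ℕ) : (qint b).Monic := by
  unfold Polynomial.Monic leadingCoeff
  rw [qint_natDegree, qint_coeff]; simp

lemma PP_monic (a : List ℕ) : (PP a).Monic := by
  induction a with
  | nil => simpa [PP] using monic_one
  | cons x l ih => simpa [PP] using (qint_monic x).mul ih

lemma PP_natDegree (a : List ℕ) : (PP a).natDegree = a.sum := by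
  induction a with
  | nil => simp [PP]
  | cons x l ih =>
    have : PP (x :: l) = qint x * PP l := by simp [PP]
    rw [this, (qint_monic x).natDegree_mul (PP_monic l), qint_natDegree, ih, List.sum_cons]

lemma PP_coeff_zero (a : List ℕ) : (PP a).coeff 0 = 1 := by
  induction a with
  | nil => simp [PP]
  | cons x l ih =>
    have : PP (x :: l) = qint x * PP l := by simp [PP]
    rw [this, mul_coeff_zero, ih, qint_coeff]; simp

lemma qint_mirror (b : ℕ) : (qint b).mirror = qint b := by
  ext n
  rw [coeff_mirror, qint_natDegree]
  have ht : (qint b).natTrailingDegree = 0 := by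
    rw [natTrailingDegree_eq_zero, qint_coeff]; simp
  rw [ht, add_zero]
  rcases le_or_gt n b with h | h
  · rw [revAt_le h, qint_coeff, qint_coeff, if_pos h, if_pos (Nat.sub_le _ _)]
  · rw [Polynomial.revAt_eq_self_of_lt h, qint_coeff]

lemma PP_mirror (a : List ℕ) : (PP a).mirror = PP a := by
  induction a with
  | nil => rw [PP]; simpa using mirror_C (1:ℚ)
  | cons x l ih =>
    have : PP (x :: l) = qint x * PP l := by simp [PP]
    rw [this, mirror_mul_of_domain, qint_mirror, ih]

lemma PP_symm (a : List ℕ) (m : ℕ) (hm : m ≤ a.sum) :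
    (PP a).coeff m = (PP a).coeff (a.sum - m) := by
  conv_lhs => rw [← PP_mirror a]
  have ht : (PP a).natTrailingDegree = 0 := by
    rw [natTrailingDegree_eq_zero, PP_coeff_zero]; simp
  rw [coeff_mirror, ht, add_zero, PP_natDegree, revAt_le hm]

lemma PP_coeff_eq_zero (a : List ℕ) (m : ℕ) (hm : a.sum < m) : (PP a).coeff m = 0 := by
  apply coeff_eq_zero_of_natDegree_lt
  rwa [PP_natDegree]

lemma coeff_mul_qint (p : Polynomial ℚ) (b k : ℕ) :
    (p * qint b).coeff k = ∑ m ∈ Finset.Icc (k - b) k, p.coeff m := by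
  rw [qint, Finset.mul_sum]
  rw [finset_sum_coeff]
  have h1 : ∀ j ∈ Finset.range (b+1), (p * X ^ j).coeff k = if j ≤ k then p.coeff (k - j) else 0 :=
    fun j _ => coeff_mul_X_pow' p j k
  rw [Finset.sum_congr rfl h1, Finset.sum_ite, Finset.sum_const_zero, add_zero]
  apply Finset.sum_nbij' (fun j => k - j) (fun m => k - m)
  · intro j hj
    simp only [Finset.mem_filter, Finset.mem_range] at hj
    simp only [Finset.mem_Icc]
    omega
  · intro m hm
    simp only [Finset.mem_Icc] at hm
    simp only [Finset.mem_filter, Finset.mem_range]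
    omega
  · intro j hj
    simp only [Finset.mem_filter, Finset.mem_range] at hj
    omega
  · intro m hm
    simp only [Finset.mem_Icc] at hm
    omega
  · intro j hj; rfl

def Cond (a : List ℕ) (k : ℕ) (ks : List ℤ) : Prop :=
  ks.length = a.length ∧
  ks.getD 0 0 = 0 ∧
  (∀ i, i + 1 < a.length → ks.getD i 0 ≤ ks.getD (i + 1) 0) ∧
  ks.getD (a.length - 1) 0 = (k : ℤ) ∧
  (∀ i, i + 1 < a.length →
    ks.getD (i + 1) 0 - ks.getD i 0 ≤
      min (((a.take (i + 1)).sum : ℤ) - 2 * ks.getD i 0) ((a.getD (i + 1) 0 : ℤ)))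

lemma getD_append_lt {α} (l : List α) (x : α) (d : α) {i : ℕ} (h : i < l.length) :
    (l ++ [x]).getD i d = l.getD i d := List.getD_append _ _ _ _ h

lemma getD_append_last {α} (l : List α) (x : α) (d : α) :
    (l ++ [x]).getD l.length d = x := by
  rw [List.getD_eq_getElem _ _ (by simp)]
  exact List.getElem_concat_length rfl _

lemma getD_dropLast (ks : List ℤ) {i : ℕ} (h : i < ks.dropLast.length) :
    ks.dropLast.getD i 0 = ks.getD i 0 := by
  rw [List.getD_eq_getElem _ _ h, List.getD_eq_getElem _ _ (lt_of_lt_of_le h (by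
    rw [List.length_dropLast]; omega)), List.getElem_dropLast]

lemma nonneg_of_chain {ks : List ℤ} (n : ℕ) (h0 : ks.getD 0 0 = 0)
    (hm : ∀ i, i + 1 < n → ks.getD i 0 ≤ ks.getD (i + 1) 0) :
    ∀ i, i < n → 0 ≤ ks.getD i 0 := by
  intro i
  induction i with
  | zero => intro _; rw [h0]
  | succ n ih => intro hn; exact le_trans (ih (by omega)) (hm n hn)

lemma cond_nonneg {a : List ℕ} {k : ℕ} {ks : List ℤ} (h : Cond a k ks) :
    ∀ i, i < a.length → 0 ≤ ks.getD i 0 :=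
  nonneg_of_chain a.length h.2.1 h.2.2.1

lemma cond_concat_intro (l : List ℕ) (b k m : ℕ) (ks' : List ℤ)
    (hl : 1 ≤ l.length) (h1 : Cond l m ks') (h2 : (m:ℤ) ≤ (k:ℤ))
    (h3 : (k:ℤ) - m ≤ min ((l.sum:ℤ) - 2*m) (b:ℤ)) :
    Cond (l ++ [b]) k (ks' ++ [(k:ℤ)]) := by
  obtain ⟨e1, e2, e3, e4, e5⟩ := h1
  have hlen : (l ++ [b]).length = l.length + 1 := by simp
  have glast : (ks' ++ [(k:ℤ)]).getD l.length 0 = (k:ℤ) := by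
    rw [← e1]; exact getD_append_last _ _ _
  refine ⟨by simp [e1], ?_, ?_, ?_, ?_⟩
  · rw [getD_append_lt _ _ _ (by omega)]; exact e2
  · intro i hi
    rw [hlen] at hi
    rcases Nat.lt_or_ge (i + 1) l.length with h | h
    · rw [getD_append_lt _ _ _ (by omega), getD_append_lt _ _ _ (by omega)]
      exact e3 i h
    · have hi1 : i + 1 = l.length := by omega
      have g1 : ks'.getD i 0 = (m:ℤ) := by
        have : i = l.length - 1 := by omega
        rw [this]; exact e4
      rw [getD_append_lt _ _ _ (by omega), g1, hi1, glast]
      exact h2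
  · have h5 : (l ++ [b]).length - 1 = l.length := by simp
    rw [h5, glast]
  · intro i hi
    rw [hlen] at hi
    rcases Nat.lt_or_ge (i + 1) l.length with h | h
    · rw [getD_append_lt _ _ _ (by omega), getD_append_lt _ _ _ (by omega),
        List.take_append_of_le_length (by omega), getD_append_lt _ _ _ h]
      exact e5 i h
    · have hi1 : i + 1 = l.length := by omega
      have g1 : ks'.getD i 0 = (m:ℤ) := by
        have : i = l.length - 1 := by omega
        rw [this]; exact e4
      have g3 : (l ++ [b]).take (i+1) = l := by rw [hi1]; exact List.take_left
      have g4 : (l ++ [b]).getD (i+1) 0 = b := by rw [hi1]; exact getD_append_last _ _ _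
      have g2 : (ks' ++ [(k:ℤ)]).getD (i+1) 0 = (k:ℤ) := by rw [hi1]; exact glast
      rw [g2, getD_append_lt _ _ _ (by omega), g1, g3, g4]
      exact h3

lemma cond_concat_elim (l : List ℕ) (b k : ℕ) (ks : List ℤ) (hl : 1 ≤ l.length)
    (h : Cond (l ++ [b]) k ks) :
    ks.length = l.length + 1 ∧
    0 ≤ ks.getD (l.length - 1) 0 ∧
    ks.getD (l.length - 1) 0 ≤ (k:ℤ) ∧
    Cond l (ks.getD (l.length - 1) 0).toNat ks.dropLast ∧
    ((k:ℤ) - ks.getD (l.length - 1) 0 ≤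
      min ((l.sum:ℤ) - 2 * ks.getD (l.length - 1) 0) (b:ℤ)) := by
  obtain ⟨e1, e2, e3, e4, e5⟩ := h
  have halen : (l ++ [b]).length = l.length + 1 := by simp
  rw [halen] at e1 e4
  rw [Nat.add_sub_cancel] at e4
  have hnn : 0 ≤ ks.getD (l.length - 1) 0 :=
    nonneg_of_chain (l.length + 1) e2 (fun i hi => e3 i (by rw [halen]; omega)) (l.length - 1) (by omega)
  have hmono : ks.getD (l.length - 1) 0 ≤ (k:ℤ) := by
    have := e3 (l.length - 1) (by rw [halen]; omega)
    rwa [Nat.sub_add_cancel hl, e4] at this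
  have hdl : ks.dropLast.length = l.length := by rw [List.length_dropLast, e1]; omega
  refine ⟨e1, hnn, hmono, ⟨hdl, ?_, ?_, ?_, ?_⟩, ?_⟩
  · rw [getD_dropLast _ (by omega)]; exact e2
  · intro i hi
    rw [getD_dropLast _ (by omega), getD_dropLast _ (by omega)]
    exact e3 i (by rw [halen]; omega)
  · rw [getD_dropLast _ (by omega), Int.toNat_of_nonneg hnn]
  · intro i hi
    rw [getD_dropLast _ (by omega), getD_dropLast _ (by omega)]
    have := e5 i (by rw [halen]; omega)
    rwa [List.take_append_of_le_length (by omega), getD_append_lt _ _ _ (by omega)] at this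
  · have := e5 (l.length - 1) (by rw [halen]; omega)
    rw [Nat.sub_add_cancel hl] at this
    rwa [e4, List.take_left, getD_append_last] at this
lemma tele (f : ℕ → ℚ) (m0 m1 : ℕ) (h : m0 ≤ m1) :
    ∑ m ∈ Finset.Icc m0 m1, (f m - if m = 0 then 0 else f (m - 1)) =
      f m1 - (if m0 = 0 then 0 else f (m0 - 1)) := by
  induction m1, h using Nat.le_induction with
  | base => simp
  | succ n hn ih =>
    rw [Finset.sum_Icc_succ_top (by omega), ih]
    have : ¬ (n + 1 = 0) := by omega
    rw [if_neg this]
    simp only [Nat.add_sub_cancel]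
    ring
lemma card_base (b k : ℕ) :
    Finite {ks // Cond [b] k ks} ∧
    Nat.card {ks // Cond [b] k ks} = (if k = 0 then 1 else 0) := by
  rcases eq_or_ne k 0 with rfl | hk
  · have hu : ∀ y : {ks // Cond [b] 0 ks}, y.1 = [0] := by
      rintro ⟨ks, h1, h2, _, _, _⟩
      obtain ⟨x, rfl⟩ := List.length_eq_one_iff.mp h1
      simp only [List.getD] at h2
      simp at h2 ⊢
      exact h2
    haveI : Subsingleton {ks // Cond [b] 0 ks} :=
      ⟨fun x y => Subtype.ext ((hu x).trans (hu y).symm)⟩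
    haveI : Nonempty {ks // Cond [b] 0 ks} := ⟨⟨[0], by
      refine ⟨rfl, by simp, fun i hi => by simp at hi, by simp, fun i hi => by simp at hi⟩⟩⟩
    refine ⟨Finite.of_subsingleton, by rw [if_pos rfl]; exact Nat.card_unique⟩
  · haveI : IsEmpty {ks // Cond [b] k ks} := ⟨by
      rintro ⟨ks, h1, h2, _, h4, _⟩
      simp only [List.length_singleton] at h4
      rw [h2] at h4
      exact hk (by exact_mod_cast h4.symm)⟩
    exact ⟨Finite.of_subsingleton, by rw [if_neg hk]; exact Nat.card_of_isEmpty⟩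

lemma sum_diff (g : ℕ → ℚ) (k b : ℕ) (hk : 1 ≤ k) :
    (∑ m ∈ Finset.Icc (k - b) k, g m) - (∑ m ∈ Finset.Icc (k - 1 - b) (k - 1), g m)
      = g k - (if k - b = 0 then 0 else g (k - b - 1)) := by
  obtain ⟨k', rfl⟩ : ∃ k', k = k' + 1 := ⟨k - 1, by omega⟩
  rcases le_or_gt (k' + 1) b with h | h
  · have h1 : k' + 1 - b = 0 := by omega
    have h2 : k' + 1 - 1 - b = 0 := by omega
    rw [h1, h2, if_pos rfl, Nat.add_sub_cancel,
      Finset.sum_Icc_succ_top (by omega) g]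
    ring
  · have h1 : k' + 1 - b ≠ 0 := by omega
    have h2 : Finset.Icc (k' + 1 - 1 - b) (k' + 1 - 1) =
        insert (k' + 1 - b - 1) (Finset.Icc (k' + 1 - b) k') := by
      ext x
      simp only [Finset.mem_Icc, Finset.mem_insert]
      omega
    rw [if_neg h1, h2, Finset.sum_insert (by simp only [Finset.mem_Icc]; omega),
      Finset.sum_Icc_succ_top (by omega) g]
    ring
lemma card_step (l : List ℕ) (hl : 1 ≤ l.length) (b k : ℕ)
    (hfin : ∀ m : ℕ, m ≤ k → ((k:ℤ) - m ≤ min ((l.sum:ℤ) - 2*m) (b:ℤ)) →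
      Finite {ks // Cond l m ks}) :
    Finite {ks // Cond (l ++ [b]) k ks} ∧
    Nat.card {ks // Cond (l ++ [b]) k ks} =
      ∑ m ∈ Finset.range (k+1),
        (if ((k:ℤ) - m ≤ min ((l.sum:ℤ) - 2*m) (b:ℤ))
          then Nat.card {ks // Cond l m ks} else 0) := by
  classical
  set T := {ks // Cond (l ++ [b]) k ks} with hT
  let f : T → Fin (k+1) := fun x => ⟨(x.1.getD (l.length - 1) 0).toNat, by
    obtain ⟨_, hnn, hmk, _, _⟩ := cond_concat_elim l b k x.1 hl x.2
    omega⟩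
  have E : ∀ m : Fin (k+1), {x : T // f x = m} ≃
      {ks' : List ℤ // Cond l m.1 ks' ∧
        ((k:ℤ) - m.1 ≤ min ((l.sum:ℤ) - 2*(m.1:ℤ)) (b:ℤ))} := by
    intro m
    refine
      { toFun := fun x => ⟨x.1.1.dropLast, ?_⟩
        invFun := fun y => ⟨⟨y.1 ++ [(k:ℤ)],
          cond_concat_intro l b k m.1 y.1 hl y.2.1
            (by exact_mod_cast Int.ofNat_le.mpr (Nat.lt_succ_iff.mp m.2)) y.2.2⟩, ?_⟩
        left_inv := ?_
        right_inv := ?_ }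
    · obtain ⟨hL, hnn, hmk, hc, hp⟩ := cond_concat_elim l b k x.1.1 hl x.1.2
      have hfx : (x.1.1.getD (l.length - 1) 0).toNat = m.1 := congrArg Fin.val x.2
      constructor
      · rw [← hfx]; exact hc
      · have hmv : (m.1 : ℤ) = x.1.1.getD (l.length - 1) 0 := by omega
        rw [hmv]; exact hp
    · apply Fin.ext
      show ((y.1 ++ [(k:ℤ)]).getD (l.length - 1) 0).toNat = m.1
      have hy1 : y.1.length = l.length := y.2.1.1
      rw [getD_append_lt _ _ _ (by omega), y.2.1.2.2.2.1]
      simp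
    · intro x
      apply Subtype.ext
      apply Subtype.ext
      show x.1.1.dropLast ++ [(k:ℤ)] = x.1.1
      obtain ⟨hL, _, _, _, _⟩ := cond_concat_elim l b k x.1.1 hl x.1.2
      have hne : x.1.1 ≠ [] := by
        intro h; rw [h] at hL; simp at hL
      have e4 := x.1.2.2.2.2.1
      have hidx : (l ++ [b]).length - 1 = l.length := by simp
      rw [hidx] at e4
      have hlast : x.1.1.getLast hne = (k:ℤ) := by
        rw [List.getLast_eq_getElem, ← List.getD_eq_getElem _ 0 (by omega)]
        rw [hL, Nat.add_sub_cancel]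
        exact e4
      conv_rhs => rw [← List.dropLast_append_getLast hne]
      rw [hlast]
    · intro y
      apply Subtype.ext
      exact List.dropLast_concat
  have hFib : ∀ m : Fin (k+1), Finite {x : T // f x = m} := by
    intro m
    by_cases hP : ((k:ℤ) - m.1 ≤ min ((l.sum:ℤ) - 2*(m.1:ℤ)) (b:ℤ))
    · haveI := hfin m.1 (Nat.lt_succ_iff.mp m.2) hP
      haveI : Finite {ks' : List ℤ // Cond l m.1 ks' ∧
          ((k:ℤ) - m.1 ≤ min ((l.sum:ℤ) - 2*(m.1:ℤ)) (b:ℤ))} :=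
        Finite.of_equiv _ (Equiv.subtypeEquivRight (fun ks' => (and_iff_left hP).symm))
      exact Finite.of_equiv _ (E m).symm
    · haveI : IsEmpty {ks' : List ℤ // Cond l m.1 ks' ∧
          ((k:ℤ) - m.1 ≤ min ((l.sum:ℤ) - 2*(m.1:ℤ)) (b:ℤ))} := ⟨fun y => hP y.2.2⟩
      exact Finite.of_equiv _ (E m).symm
  haveI := hFib
  have EqT : (Σ m : Fin (k+1), {x : T // f x = m}) ≃ T := Equiv.sigmaFiberEquiv f
  haveI hFT : Finite T := Finite.of_equiv _ EqT
  refine ⟨hFT, ?_⟩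
  haveI : ∀ m : Fin (k+1), Fintype {x : T // f x = m} := fun m => Fintype.ofFinite _
  have h1 : Nat.card T = ∑ m : Fin (k+1), Nat.card {x : T // f x = m} := by
    rw [← Nat.card_congr EqT, Nat.card_eq_fintype_card, Fintype.card_sigma]
    simp [Nat.card_eq_fintype_card]
  have h2 : ∀ m : Fin (k+1), Nat.card {x : T // f x = m} =
      (if ((k:ℤ) - m.1 ≤ min ((l.sum:ℤ) - 2*(m.1:ℤ)) (b:ℤ))
        then Nat.card {ks // Cond l m.1 ks} else 0) := by
    intro m
    rw [Nat.card_congr (E m)]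
    by_cases hP : ((k:ℤ) - m.1 ≤ min ((l.sum:ℤ) - 2*(m.1:ℤ)) (b:ℤ))
    · rw [if_pos hP]
      exact Nat.card_congr (Equiv.subtypeEquivRight (fun ks' => and_iff_left hP))
    · rw [if_neg hP]
      haveI : IsEmpty {ks' : List ℤ // Cond l m.1 ks' ∧
          ((k:ℤ) - m.1 ≤ min ((l.sum:ℤ) - 2*(m.1:ℤ)) (b:ℤ))} := ⟨fun y => hP y.2.2⟩
      exact Nat.card_of_isEmpty
  rw [h1, Finset.sum_congr rfl (fun m _ => h2 m)]
  exact Fin.sum_univ_eq_sum_range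
    (fun i => if ((k:ℤ) - i ≤ min ((l.sum:ℤ) - 2*(i:ℤ)) (b:ℤ))
      then Nat.card {ks // Cond l i ks} else 0) (k+1)

lemma main_count (a : List ℕ) (ha : a ≠ []) :
    ∀ k : ℕ, 2 * k ≤ a.sum →
      Finite {ks // Cond a k ks} ∧
      (PP a).coeff k - (if k = 0 then 0 else (PP a).coeff (k - 1)) =
        (Nat.card {ks // Cond a k ks} : ℚ) := by
  induction a using List.reverseRecOn with
  | nil => exact absurd rfl ha
  | append_singleton l b ih =>
    rcases eq_or_ne l [] with rfl | hl
    · simp only [List.nil_append, List.sum_cons, List.sum_nil, add_zero]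
      intro k hk
      obtain ⟨hF, hC⟩ := card_base b k
      refine ⟨hF, ?_⟩
      have hPPb : PP [b] = qint b := by simp [PP]
      rw [hPPb, hC, qint_coeff]
      rcases eq_or_ne k 0 with rfl | hk0
      · simp
      · rw [if_neg hk0, if_neg hk0, if_pos (by omega : k ≤ b), qint_coeff,
          if_pos (by omega : k - 1 ≤ b)]
        simp
    · have hl1 : 1 ≤ l.length := List.length_pos_iff.mpr hl
      intro k hk
      rw [List.sum_append, List.sum_cons, List.sum_nil, add_zero] at hk
      have hfin : ∀ m : ℕ, m ≤ k →
          ((k:ℤ) - m ≤ min ((l.sum:ℤ) - 2*m) (b:ℤ)) → Finite {ks // Cond l m ks} := by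
        intro m hm hP
        have h1 : (k:ℤ) - m ≤ (l.sum:ℤ) - 2*m := le_trans hP (min_le_left _ _)
        have h2m : 2 * m ≤ l.sum := by omega
        exact (ih hl m h2m).1
      obtain ⟨hFin, hCard⟩ := card_step l hl1 b k hfin
      refine ⟨hFin, ?_⟩
      have hrw : ∀ m ∈ Finset.range (k+1),
          ((if ((k:ℤ) - m ≤ min ((l.sum:ℤ) - 2*m) (b:ℤ))
            then Nat.card {ks // Cond l m ks} else 0 : ℕ) : ℚ) =
          (if ((k:ℤ) - m ≤ min ((l.sum:ℤ) - 2*m) (b:ℤ))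
            then ((PP l).coeff m - if m = 0 then 0 else (PP l).coeff (m-1)) else 0) := by
        intro m hm
        by_cases hP : ((k:ℤ) - m ≤ min ((l.sum:ℤ) - 2*m) (b:ℤ))
        · have h1 : (k:ℤ) - m ≤ (l.sum:ℤ) - 2*m := le_trans hP (min_le_left _ _)
          have hm' : m ≤ k := by simp only [Finset.mem_range] at hm; omega
          have h2m : 2 * m ≤ l.sum := by omega
          rw [if_pos hP, if_pos hP]
          exact ((ih hl m h2m).2).symm
        · rw [if_neg hP, if_neg hP]
          simp
      rw [hCard, Nat.cast_sum, Finset.sum_congr rfl hrw, ← Finset.sum_filter]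
      -- left side: coefficients of PP (l ++ [b])
      have hPP : PP (l ++ [b]) = PP l * qint b := by
        simp [PP]
      rw [hPP]
      rcases le_or_gt k l.sum with hkS | hkS
      · -- filter = Icc (k-b) (min k (l.sum - k))
        have hfilter : Finset.filter
            (fun m : ℕ => ((k:ℤ) - m ≤ min ((l.sum:ℤ) - 2*m) (b:ℤ))) (Finset.range (k+1)) =
            Finset.Icc (k - b) (min k (l.sum - k)) := by
          ext m
          simp only [Finset.mem_filter, Finset.mem_range, Finset.mem_Icc, le_min_iff]
          omega
        rw [hfilter, tele _ _ _ (by omega)]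
        rcases eq_or_ne k 0 with rfl | hk0
        · simp only [if_pos rfl, Nat.zero_sub, Nat.sub_zero, min_self,
            Nat.min_eq_left (Nat.zero_le _)]
          rw [coeff_mul_qint]
          simp
        · rw [if_neg hk0, coeff_mul_qint, coeff_mul_qint,
            sum_diff (fun m => (PP l).coeff m) k b (by omega)]
          have hgk : (PP l).coeff k = (PP l).coeff (min k (l.sum - k)) := by
            rcases le_or_gt k (l.sum - k) with h | h
            · rw [min_eq_left h]
            · rw [min_eq_right (by omega)]
              have := PP_symm l k hkS
              rw [this]
          rw [hgk]
      · -- k > l.sum : filter empty, both sides 0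
        have hfilter : Finset.filter
            (fun m : ℕ => ((k:ℤ) - m ≤ min ((l.sum:ℤ) - 2*m) (b:ℤ))) (Finset.range (k+1)) =
            (∅ : Finset ℕ) := by
          ext m
          simp only [Finset.mem_filter, Finset.mem_range, Finset.notMem_empty,
            iff_false, not_and, le_min_iff, not_le]
          intro hm hc
          omega
        rw [hfilter, Finset.sum_empty]
        have hk0 : k ≠ 0 := by omega
        rw [if_neg hk0, coeff_mul_qint, coeff_mul_qint,
          sum_diff (fun m => (PP l).coeff m) k b (by omega)]
        have h1 : k - b = 0 := by omega
        rw [h1, if_pos rfl, PP_coeff_eq_zero l k hkS]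
        ring

theorem q_integer_product_differences (t : ℕ) (ht : 1 ≤ t) (a : List ℕ) (hlen : a.length = t)
    (p : Polynomial ℚ) (hp : p = (a.map qint).prod) :
    (∀ m ≤ a.sum, p.coeff m = p.coeff (a.sum - m)) ∧
    (∀ m, m < a.sum / 2 → p.coeff m ≤ p.coeff (m + 1)) ∧
    (∀ m, a.sum / 2 ≤ m → m < a.sum → p.coeff (m + 1) ≤ p.coeff m) ∧
    (∀ k : ℕ, 2 * k ≤ a.sum →
      p.coeff k - (if k = 0 then 0 else p.coeff (k - 1)) =
        (Nat.card {ks : List ℤ //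
          ks.length = t ∧
          ks.getD 0 0 = 0 ∧
          (∀ i, i + 1 < t → ks.getD i 0 ≤ ks.getD (i + 1) 0) ∧
          ks.getD (t - 1) 0 = (k : ℤ) ∧
          (∀ i, i + 1 < t →
            ks.getD (i + 1) 0 - ks.getD i 0 ≤
              min (((a.take (i + 1)).sum : ℤ) - 2 * ks.getD i 0)
                ((a.getD (i + 1) 0 : ℤ)))} : ℚ)) := by
  subst hlen
  have hpPP : p = PP a := hp
  subst hpPP
  have ha : a ≠ [] := by
    intro h
    rw [h] at ht
    simp at ht
  refine ⟨?_, ?_, ?_, ?_⟩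
  · intro m hm
    exact PP_symm a m hm
  · intro m hm
    have h2 : 2 * (m + 1) ≤ a.sum := by omega
    have := (main_count a ha (m + 1) h2).2
    rw [if_neg (by omega : m + 1 ≠ 0)] at this
    have hnn : (0:ℚ) ≤ (Nat.card {ks // Cond a (m+1) ks} : ℚ) := Nat.cast_nonneg _
    simp only [Nat.add_sub_cancel] at this
    linarith
  · intro m hm1 hm2
    rcases eq_or_ne a.sum (2 * m + 1) with hodd | hne
    · have h1 : m + 1 ≤ a.sum := by omega
      rw [PP_symm a (m+1) h1, hodd]
      have : 2 * m + 1 - (m + 1) = m := by omega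
      rw [this]
    · have hge : a.sum ≤ 2 * m := by omega
      have h1 : m + 1 ≤ a.sum := by omega
      have h2 : m ≤ a.sum := by omega
      rw [PP_symm a (m+1) h1, PP_symm a m h2]
      set j := a.sum - (m + 1) with hj
      have hj1 : a.sum - m = j + 1 := by omega
      rw [hj1]
      have h3 : 2 * (j + 1) ≤ a.sum := by omega
      have := (main_count a ha (j + 1) h3).2
      rw [if_neg (by omega : j + 1 ≠ 0)] at this
      have hnn : (0:ℚ) ≤ (Nat.card {ks // Cond a (j+1) ks} : ℚ) := Nat.cast_nonneg _
      simp only [Nat.add_sub_cancel] at this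
      linarith
  · intro k hk
    exact (main_count a ha k hk).2
end

section
/- (Sylvester's unimodality theorem) For all integers n, k ≥ 1, the sequence p_0(n,k), p_1(n,k), …, p_{nk}(n,k) is symmetric and unimodal: p_r(n,k) = p_{nk−r}(n,k) for all 0 ≤ r ≤ nk, and p_{r−1}(n,k) ≤ p_r(n,k) for all 1 ≤ r ≤ nk/2. -/
/-- `μ` is a partition: all parts positive. -/
def IsPtn (μ : Multiset ℕ) : Prop := ∀ x ∈ μ, 0 < x

/-- `p_r(n,k)`: number of partitions of `r` with at most `k` parts, each of size at most `n`. -/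
noncomputable def prnk (n k r : ℕ) : ℕ :=
  Nat.card {μ : Multiset ℕ // IsPtn μ ∧ μ.sum = r ∧ μ.card ≤ k ∧ ∀ x ∈ μ, x ≤ n}

open Finset

namespace Sylv

abbrev V : Type := Finset ℕ →₀ ℚ

noncomputable def upo (a : ℕ) : V →ₗ[ℚ] V :=
  Finsupp.lsum ℚ fun S => LinearMap.toSpanSingleton ℚ V
    (if a ∈ S ∧ a+1 ∉ S then Finsupp.single (insert (a+1) (S.erase a)) 1 else 0)

noncomputable def dno (a : ℕ) : V →ₗ[ℚ] V :=
  Finsupp.lsum ℚ fun S => LinearMap.toSpanSingleton ℚ V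
    (if a+1 ∈ S ∧ a ∉ S then Finsupp.single (insert a (S.erase (a+1))) 1 else 0)

lemma upo_single (a : ℕ) (S : Finset ℕ) :
    upo a (Finsupp.single S 1) =
      (if a ∈ S ∧ a+1 ∉ S then Finsupp.single (insert (a+1) (S.erase a)) 1 else 0) := by
  simp [upo, Finsupp.lsum_single, LinearMap.toSpanSingleton_apply]

lemma dno_single (a : ℕ) (S : Finset ℕ) :
    dno a (Finsupp.single S 1) =
      (if a+1 ∈ S ∧ a ∉ S then Finsupp.single (insert a (S.erase (a+1))) 1 else 0) := by
  simp [dno, Finsupp.lsum_single, LinearMap.toSpanSingleton_apply]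

lemma comm_off {a b : ℕ} (hab : a ≠ b) (S : Finset ℕ) :
    dno b (upo a (Finsupp.single S 1)) = upo a (dno b (Finsupp.single S 1)) := by
  rw [upo_single, dno_single, apply_ite (dno b), apply_ite (upo a), dno_single, upo_single,
    map_zero, map_zero]
  rcases eq_or_ne b (a+1) with rfl | h1
  · split_ifs <;> simp_all [Finset.mem_insert, Finset.mem_erase]
  rcases eq_or_ne a (b+1) with rfl | h2
  · split_ifs <;> simp_all [Finset.mem_insert, Finset.mem_erase]
  -- distant case
  have d1 : a+1 ≠ b := fun h => h1 (by omega)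
  have d2 : b+1 ≠ a := fun h => h2 h.symm
  have d3 : a+1 ≠ b+1 := fun h => hab (by omega)
  split_ifs with hP hQ1 hQ2 hQ3 <;>
    first
    | rfl
    | (congr 1; ext x; by_cases hx : x ∈ S <;>
        simp [Finset.mem_insert, Finset.mem_erase, hx] <;> omega)
    | (exfalso; simp_all [Finset.mem_insert, Finset.mem_erase]; all_goals tauto)

lemma comm_diag (a : ℕ) (S : Finset ℕ) :
    dno a (upo a (Finsupp.single S 1)) - upo a (dno a (Finsupp.single S 1)) =
      ((if a ∈ S ∧ a+1 ∉ S then 1 else 0) - (if a+1 ∈ S ∧ a ∉ S then 1 else 0) : ℚ) •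
        (Finsupp.single S 1 : V) := by
  rw [upo_single, dno_single, apply_ite (dno a), apply_ite (upo a), dno_single, upo_single,
    map_zero, map_zero]
  by_cases hP : a ∈ S ∧ a+1 ∉ S <;> by_cases hQ : a+1 ∈ S ∧ a ∉ S
  · exact absurd hQ.1 hP.2
  · -- P true, Q false: LHS = single S 1
    have c1 : a+1 ∈ insert (a+1) (S.erase a) ∧ a ∉ insert (a+1) (S.erase a) := by
      simp [Finset.mem_insert, Finset.mem_erase]
    have c2 : insert a ((insert (a+1) (S.erase a)).erase (a+1)) = S := by
      rw [Finset.erase_insert (by simp [Finset.mem_erase, hP.2]), Finset.insert_erase hP.1]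
    simp [hP, hQ, c1, c2]
  · -- Q true, P false
    have c1 : a ∈ insert a (S.erase (a+1)) ∧ a+1 ∉ insert a (S.erase (a+1)) := by
      simp [Finset.mem_insert, Finset.mem_erase]
    have c2 : insert (a+1) ((insert a (S.erase (a+1))).erase a) = S := by
      rw [Finset.erase_insert (by simp [Finset.mem_erase, hQ.2]), Finset.insert_erase hQ.1]
    simp [hP, hQ, c1, c2]
  · simp [hP, hQ]

/-- coefficient for the raising move `a → a+1` -/
noncomputable def gam (m a : ℕ) : ℚ := (a+1) * ((m:ℚ) - 1 - a)

noncomputable def U (m : ℕ) : V →ₗ[ℚ] V := ∑ a ∈ range m, gam m a • upo a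

noncomputable def D (m : ℕ) : V →ₗ[ℚ] V := ∑ a ∈ range m, dno a

/-- The key scalar identity. -/
lemma scalar_id {m : ℕ} {S : Finset ℕ} (hS : S ⊆ range m) :
    ∑ a ∈ range m, gam m a *
        ((if a ∈ S ∧ a+1 ∉ S then 1 else 0) - (if a+1 ∈ S ∧ a ∉ S then 1 else 0) : ℚ) =
      S.card * ((m:ℚ) - 1) - 2 * (S.sum (fun i => (i:ℚ))) := by
  have key : ∀ a, ((if a ∈ S ∧ a+1 ∉ S then 1 else 0) - (if a+1 ∈ S ∧ a ∉ S then 1 else 0) : ℚ)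
      = (if a ∈ S then 1 else 0) - (if a+1 ∈ S then 1 else 0) := by
    intro a
    by_cases h1 : a ∈ S <;> by_cases h2 : a+1 ∈ S <;> simp [h1, h2]
  simp only [key, mul_sub]
  rw [Finset.sum_sub_distrib]
  have e1 : ∑ a ∈ range m, gam m a * (if a ∈ S then 1 else 0) = ∑ i ∈ S, gam m i := by
    simp only [mul_ite, mul_one, mul_zero]
    rw [Finset.sum_ite_mem, Finset.inter_eq_right.2 hS]
  have e2 : ∑ a ∈ range m, gam m a * (if a+1 ∈ S then 1 else 0)
      = ∑ i ∈ S, (if i = 0 then 0 else gam m (i-1)) := by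
    simp only [mul_ite, mul_one, mul_zero]
    rw [Finset.sum_ite, Finset.sum_const_zero, add_zero]
    rw [Finset.sum_ite, Finset.sum_const_zero, zero_add]
    apply Finset.sum_nbij' (fun a => a + 1) (fun i => i - 1)
    · intro a ha
      simp only [Finset.mem_filter] at ha ⊢
      exact ⟨ha.2, by omega⟩
    · intro i hi
      simp only [Finset.mem_filter, Finset.mem_range] at hi ⊢
      have := hS hi.1
      simp only [Finset.mem_range] at this
      refine ⟨by omega, ?_⟩
      have h1 : i - 1 + 1 = i := by omega
      rw [h1]; exact hi.1
    · intro a _; omega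
    · intro i hi
      simp only [Finset.mem_filter] at hi
      omega
    · intro a _; rfl
  rw [e1, e2, ← Finset.sum_sub_distrib]
  have e3 : ∀ i ∈ S, gam m i - (if i = 0 then 0 else gam m (i-1)) = (m:ℚ) - 1 - 2 * i := by
    intro i _
    rcases Nat.eq_zero_or_pos i with rfl | hi
    · simp [gam]
    · rw [if_neg (by omega)]
      unfold gam
      have : ((i-1 : ℕ) : ℚ) = (i:ℚ) - 1 := by
        rw [Nat.cast_sub hi]; simp
      rw [this]; ring
  rw [Finset.sum_congr rfl e3]
  simp only [Finset.sum_sub_distrib, Finset.sum_const, ← Finset.mul_sum, nsmul_eq_mul, mul_one]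

lemma comm_single {m : ℕ} {S : Finset ℕ} (hS : S ⊆ range m) :
    D m (U m (Finsupp.single S 1)) - U m (D m (Finsupp.single S 1)) =
      ((S.card : ℚ) * ((m:ℚ) - 1) - 2 * (S.sum (fun i => (i:ℚ)))) • (Finsupp.single S 1 : V) := by
  set x : V := Finsupp.single S 1 with hx
  have hU : ∀ y : V, U m y = ∑ a ∈ range m, gam m a • upo a y := by
    intro y; rw [U, LinearMap.sum_apply]; simp
  have hD : ∀ y : V, D m y = ∑ b ∈ range m, dno b y := by
    intro y; rw [D, LinearMap.sum_apply]
  have A : D m (U m x) = ∑ b ∈ range m, ∑ a ∈ range m, gam m a • dno b (upo a x) := by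
    rw [hU, hD]
    refine Finset.sum_congr rfl fun b _ => ?_
    rw [map_sum]
    exact Finset.sum_congr rfl fun a _ => by rw [map_smul]
  have B : U m (D m x) = ∑ b ∈ range m, ∑ a ∈ range m, gam m a • upo a (dno b x) := by
    rw [hD, map_sum]
    exact Finset.sum_congr rfl fun b _ => hU _
  rw [A, B, ← Finset.sum_sub_distrib]
  have C : ∀ b ∈ range m,
      ((∑ a ∈ range m, gam m a • dno b (upo a x)) - ∑ a ∈ range m, gam m a • upo a (dno b x))
      = gam m b • (dno b (upo b x) - upo b (dno b x)) := by
    intro b hb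
    rw [← Finset.sum_sub_distrib]
    simp only [← smul_sub]
    refine Finset.sum_eq_single_of_mem b hb fun a _ hne => ?_
    rw [comm_off hne, sub_self, smul_zero]
  rw [Finset.sum_congr rfl C]
  have E : ∀ b ∈ range m, gam m b • (dno b (upo b x) - upo b (dno b x))
      = (gam m b * ((if b ∈ S ∧ b+1 ∉ S then 1 else 0) - (if b+1 ∈ S ∧ b ∉ S then 1 else 0) : ℚ)) • x := by
    intro b _
    rw [comm_diag, smul_smul]
  rw [Finset.sum_congr rfl E, ← Finset.sum_smul, scalar_id hS]

/-- `k`-subsets of `{0,…,m-1}` with sum `w`. -/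
def A (m k w : ℕ) : Finset (Finset ℕ) :=
  ((range m).powersetCard k).filter fun S => S.sum id = w

lemma mem_A {m k w : ℕ} {S : Finset ℕ} :
    S ∈ A m k w ↔ S ⊆ range m ∧ S.card = k ∧ S.sum id = w := by
  simp [A, Finset.mem_powersetCard, and_assoc]

/-- The weight space spanned by the indicators of elements of `A m k w`. -/
noncomputable def W (m k w : ℕ) : Submodule ℚ V :=
  Submodule.span ℚ ((fun S => Finsupp.single S (1:ℚ)) '' (A m k w : Set (Finset ℕ)))

lemma U_mem_W {m k w : ℕ} {v : V} (hv : v ∈ W m k w) : U m v ∈ W m k (w+1) := by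
  induction hv using Submodule.span_induction with
  | mem y hy =>
    obtain ⟨S, hS, rfl⟩ := hy
    rw [Finset.mem_coe, mem_A] at hS
    obtain ⟨hsub, hcard, hsum⟩ := hS
    show U m (Finsupp.single S 1) ∈ _
    have hU : ∀ y : V, U m y = ∑ a ∈ range m, gam m a • upo a y := by
      intro y; rw [U, LinearMap.sum_apply]; simp
    rw [hU]
    refine Submodule.sum_mem _ fun a ha => ?_
    rw [upo_single]
    by_cases hcond : a ∈ S ∧ a+1 ∉ S
    · rw [if_pos hcond]
      by_cases hgam : gam m a = 0
      · rw [hgam, zero_smul]; exact Submodule.zero_mem _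
      · refine Submodule.smul_mem _ _ (Submodule.subset_span ⟨_, ?_, rfl⟩)
        have ham : a < m := Finset.mem_range.1 ha
        have ha1 : a + 1 < m := by
          rcases Nat.lt_or_ge (a+1) m with h | h
          · exact h
          · exfalso; apply hgam
            have : (m:ℚ) = (a:ℚ) + 1 := by
              have : m = a + 1 := by omega
              rw [this]; push_cast; ring
            simp [gam, this]
        rw [Finset.mem_coe, mem_A]
        refine ⟨?_, ?_, ?_⟩
        · intro x hx
          rcases Finset.mem_insert.1 hx with rfl | hx
          · exact Finset.mem_range.2 ha1
          · exact hsub (Finset.mem_of_mem_erase hx)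
        · rw [Finset.card_insert_of_notMem (by simp [Finset.mem_erase, hcond.2]),
            Finset.card_erase_of_mem hcond.1]
          have : 1 ≤ S.card := Finset.card_pos.2 ⟨a, hcond.1⟩
          omega
        · rw [Finset.sum_insert (by simp [Finset.mem_erase, hcond.2])]
          have h2 : ∑ x ∈ S.erase a, id x + id a = ∑ x ∈ S, id x := Finset.sum_erase_add S id hcond.1
          simp only [id_eq, Finset.sum_apply, id] at h2 hsum ⊢
          omega
    · rw [if_neg hcond, smul_zero]; exact Submodule.zero_mem _
  | zero => simpa using Submodule.zero_mem _
  | add y z _ _ hy hz => rw [map_add]; exact Submodule.add_mem _ hy hz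
  | smul c y _ hy => rw [map_smul]; exact Submodule.smul_mem _ _ hy

lemma D_mem_W {m k w : ℕ} {v : V} (hv : v ∈ W m k (w+1)) : D m v ∈ W m k w := by
  induction hv using Submodule.span_induction with
  | mem y hy =>
    obtain ⟨S, hS, rfl⟩ := hy
    rw [Finset.mem_coe, mem_A] at hS
    obtain ⟨hsub, hcard, hsum⟩ := hS
    show D m (Finsupp.single S 1) ∈ _
    have hD : ∀ y : V, D m y = ∑ a ∈ range m, dno a y := by
      intro y; rw [D, LinearMap.sum_apply]
    rw [hD]
    refine Submodule.sum_mem _ fun a ha => ?_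
    rw [dno_single]
    by_cases hcond : a+1 ∈ S ∧ a ∉ S
    · rw [if_pos hcond]
      refine Submodule.subset_span ⟨_, ?_, rfl⟩
      have ha1 : a + 1 < m := Finset.mem_range.1 (hsub hcond.1)
      rw [Finset.mem_coe, mem_A]
      refine ⟨?_, ?_, ?_⟩
      · intro x hx
        rcases Finset.mem_insert.1 hx with rfl | hx
        · exact Finset.mem_range.2 (by omega)
        · exact hsub (Finset.mem_of_mem_erase hx)
      · rw [Finset.card_insert_of_notMem (by simp [Finset.mem_erase, hcond.2]),
          Finset.card_erase_of_mem hcond.1]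
        have : 1 ≤ S.card := Finset.card_pos.2 ⟨a+1, hcond.1⟩
        omega
      · rw [Finset.sum_insert (by simp [Finset.mem_erase, hcond.2])]
        have h2 : ∑ x ∈ S.erase (a+1), id x + id (a+1) = ∑ x ∈ S, id x :=
          Finset.sum_erase_add S id hcond.1
        simp only [id_eq, Finset.sum_apply, id] at h2 hsum ⊢
        omega
    · rw [if_neg hcond]; exact Submodule.zero_mem _
  | zero => simpa using Submodule.zero_mem _
  | add y z _ _ hy hz => rw [map_add]; exact Submodule.add_mem _ hy hz
  | smul c y _ hy => rw [map_smul]; exact Submodule.smul_mem _ _ hy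

lemma min_sum : ∀ (k : ℕ) (S : Finset ℕ), S.card = k →
    ((∑ i ∈ range k, i) ≤ S.sum id ∧ (S.sum id = ∑ i ∈ range k, i → S = range k)) := by
  intro k
  induction k with
  | zero =>
    intro S hS
    rw [Finset.card_eq_zero] at hS
    subst hS; simp
  | succ k ih =>
    intro S hS
    have hne : S.Nonempty := Finset.card_pos.1 (by omega)
    set M := S.max' hne with hM
    have hMmem : M ∈ S := S.max'_mem hne
    have hMle : ∀ x ∈ S, x ≤ M := fun x hx => S.le_max' x hx
    have hsub : S ⊆ range (M+1) := fun x hx => Finset.mem_range.2 (by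
      have := hMle x hx; omega)
    have hcardle : k + 1 ≤ M + 1 := by
      have := Finset.card_le_card hsub
      rw [hS, Finset.card_range] at this; exact this
    have hkM : k ≤ M := by omega
    have hce : (S.erase M).card = k := by rw [Finset.card_erase_of_mem hMmem, hS]; omega
    obtain ⟨ihle, iheq⟩ := ih (S.erase M) hce
    have hse : ∑ x ∈ S.erase M, id x + id M = ∑ x ∈ S, id x := Finset.sum_erase_add S id hMmem
    rw [Finset.sum_range_succ]
    simp only [id_eq, id] at hse ihle iheq ⊢
    constructor
    · omega
    · intro heq
      have h1 : S.erase M = range k := iheq (by omega)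
      have h2 : M = k := by
        have h3 : ∑ x ∈ S.erase M, x = ∑ i ∈ range k, i := by rw [h1]
        omega
      rw [Finset.range_add_one, ← h1, ← h2]
      exact (Finset.insert_erase hMmem).symm

lemma D_bot {m k : ℕ} {v : V} (hv : v ∈ W m k (∑ i ∈ range k, i)) : D m v = 0 := by
  induction hv using Submodule.span_induction with
  | mem y hy =>
    obtain ⟨S, hS, rfl⟩ := hy
    rw [Finset.mem_coe, mem_A] at hS
    have hSr : S = range k := (min_sum k S hS.2.1).2 hS.2.2
    show D m (Finsupp.single S 1) = 0
    have hD : D m (Finsupp.single S (1:ℚ)) = ∑ a ∈ range m, dno a (Finsupp.single S 1) := by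
      rw [D, LinearMap.sum_apply]
    rw [hD]
    refine Finset.sum_eq_zero fun a _ => ?_
    rw [dno_single, if_neg]
    rintro ⟨h1, h2⟩
    rw [hSr, Finset.mem_range] at h1 h2
    omega
  | zero => simp
  | add y z _ _ hy hz => rw [map_add, hy, hz, add_zero]
  | smul c y _ hy => rw [map_smul, hy, smul_zero]

lemma comm_W {n k r : ℕ} (hk : 1 ≤ k) {v : V}
    (hv : v ∈ W (n+k) k ((∑ i ∈ range k, i) + r)) :
    D (n+k) (U (n+k) v) - U (n+k) (D (n+k) v) = ((n:ℚ)*k - 2*r) • v := by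
  induction hv using Submodule.span_induction with
  | mem y hy =>
    obtain ⟨S, hS, rfl⟩ := hy
    rw [Finset.mem_coe, mem_A] at hS
    obtain ⟨hsub, hcard, hsum⟩ := hS
    show D (n+k) (U (n+k) (Finsupp.single S 1)) - U (n+k) (D (n+k) (Finsupp.single S 1)) = _
    rw [comm_single hsub]
    congr 1
    have hcast : (S.sum (fun i => (i:ℚ))) = ((∑ i ∈ range k, i : ℕ) : ℚ) + r := by
      have h1 : ∑ i ∈ S, (i:ℚ) = ((∑ i ∈ S, i : ℕ) : ℚ) := (Nat.cast_sum S (fun i => i)).symm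
      have h2 : ∑ i ∈ S, i = ∑ i ∈ range k, i + r := hsum
      rw [h1, h2]; push_cast; ring
    rw [hcard, hcast]
    have h2w : (∑ i ∈ range k, i) * 2 = k * (k-1) := Finset.sum_range_id_mul_two k
    have hq : ((∑ i ∈ range k, i : ℕ) : ℚ) * 2 = (k:ℚ) * ((k:ℚ) - 1) := by
      rw [← Nat.cast_ofNat, ← Nat.cast_mul, h2w, Nat.cast_mul, Nat.cast_sub hk]
      push_cast; ring
    rw [Nat.cast_add]
    linarith [hq]
  | zero => simp
  | add y z _ _ hy hz =>
    rw [map_add, map_add, map_add, map_add, smul_add, ← hy, ← hz]; abel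
  | smul c y _ hy =>
    rw [map_smul, map_smul, map_smul, map_smul, ← smul_sub, hy, smul_comm]

lemma U_inj {n k s : ℕ} (hk : 1 ≤ k) (h2s : 2*s < n*k) {v : V}
    (hv : v ∈ W (n+k) k ((∑ i ∈ range k, i) + s)) (hUv : U (n+k) v = 0) : v = 0 := by
  set m := n + k with hm
  -- the chain v, Dv, D²v, …
  set vj : ℕ → V := fun j => ((D m)^j : V →ₗ[ℚ] V) v with hvj
  have hvj0 : vj 0 = v := rfl
  have hvjs : ∀ j, vj (j+1) = D m (vj j) := by
    intro j
    show ((D m)^(j+1)) v = D m (((D m)^j) v)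
    rw [pow_succ']
    rfl
  -- membership of the chain in the weight spaces
  have hmem : ∀ j, j ≤ s → vj j ∈ W m k ((∑ i ∈ range k, i) + (s - j)) := by
    intro j
    induction j with
    | zero => intro _; simpa [hvj0] using hv
    | succ j ih =>
      intro hjs
      have h1 : vj j ∈ W m k ((∑ i ∈ range k, i) + (s - j)) := ih (by omega)
      have h2 : (∑ i ∈ range k, i) + (s - j) = ((∑ i ∈ range k, i) + (s - (j+1))) + 1 := by
        omega
      rw [h2] at h1
      rw [hvjs]
      exact D_mem_W h1
  -- the top of the chain vanishes
  have htop : vj (s+1) = 0 := by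
    have h1 : vj s ∈ W m k (∑ i ∈ range k, i) := by simpa using hmem s le_rfl
    rw [hvjs]
    exact D_bot h1
  -- the structure constants
  set c : ℕ → ℚ := fun j => -(j:ℚ)*((n:ℚ)*(k:ℚ) - 2*(s:ℚ) + (j:ℚ) - 1) with hc
  have hcne : ∀ j, 1 ≤ j → c j ≠ 0 := by
    intro j hj
    have h1 : (1:ℚ) ≤ (j:ℚ) := by exact_mod_cast hj
    have h2 : 2*(s:ℚ) + 1 ≤ (n:ℚ)*(k:ℚ) := by exact_mod_cast h2s
    have : (0:ℚ) < (j:ℚ)*((n:ℚ)*(k:ℚ) - 2*(s:ℚ) + (j:ℚ) - 1) := by nlinarith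
    show -(j:ℚ)*((n:ℚ)*(k:ℚ) - 2*(s:ℚ) + (j:ℚ) - 1) ≠ 0
    rw [neg_mul, neg_ne_zero]
    exact ne_of_gt this
  -- the main recurrence
  have hP : ∀ j, j ≤ s → U m (vj (j+1)) = c (j+1) • vj j := by
    intro j
    induction j with
    | zero =>
      intro _
      rw [hvjs, hvj0]
      have hcw := comm_W (n := n) (k := k) (r := s) hk hv
      rw [hUv, map_zero, zero_sub] at hcw
      have h1 : U m (D m v) = -(((n:ℚ)*k - 2*(s:ℚ)) • v) := by
        rw [← hcw, neg_neg]
      rw [h1, ← neg_smul]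
      congr 1
      show -((n:ℚ)*k - 2*(s:ℚ)) = -((1:ℕ):ℚ)*((n:ℚ)*(k:ℚ) - 2*(s:ℚ) + ((1:ℕ):ℚ) - 1)
      push_cast; ring
    | succ j ih =>
      intro hjs
      have hmemj : vj (j+1) ∈ W m k ((∑ i ∈ range k, i) + (s - (j+1))) := hmem _ hjs
      have hcw := comm_W (n := n) (k := k) (r := s - (j+1)) hk hmemj
      rw [ih (by omega), map_smul, ← hvjs, ← hvjs] at hcw
      have h1 : U m (vj (j+1+1)) = (c (j+1) - ((n:ℚ)*k - 2*((s - (j+1) : ℕ):ℚ))) • vj (j+1) := by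
        rw [sub_smul, ← hcw, sub_sub_cancel]
      rw [h1]
      congr 1
      have hcast : ((s - (j+1) : ℕ):ℚ) = (s:ℚ) - (j:ℚ) - 1 := by
        rw [Nat.cast_sub hjs]; push_cast; ring
      rw [hcast, hc]
      push_cast; ring
  -- downward induction: everything vanishes
  have hzero : ∀ d, d ≤ s+1 → vj (s+1-d) = 0 := by
    intro d
    induction d with
    | zero => intro _; simpa using htop
    | succ d ih =>
      intro hds
      have h1 : vj (s+1-d) = 0 := ih (by omega)
      have h2 : s+1-d = (s+1-(d+1))+1 := by omega
      have h3 := hP (s+1-(d+1)) (by omega)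
      rw [← h2, h1, map_zero] at h3
      have h4 : c (s+1-d) ≠ 0 := hcne _ (by omega)
      rcases smul_eq_zero.1 h3.symm with h | h
      · exact absurd h h4
      · exact h
  have := hzero (s+1) le_rfl
  simpa [hvj0] using this

lemma finrank_W (m k w : ℕ) : Module.finrank ℚ (W m k w) = (A m k w).card := by
  classical
  have hsinj : Function.Injective (fun S : Finset ℕ => Finsupp.single S (1:ℚ)) :=
    Finsupp.single_left_injective one_ne_zero
  have hinj : Set.InjOn (fun S : Finset ℕ => Finsupp.single S (1:ℚ)) (A m k w : Set (Finset ℕ)) :=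
    hsinj.injOn
  haveI : Fintype ((fun S : Finset ℕ => Finsupp.single S (1:ℚ)) '' ((A m k w : Set (Finset ℕ)))) :=
    (((A m k w).finite_toSet).image _).fintype
  have hli : LinearIndependent ℚ (fun x : ((fun S : Finset ℕ => Finsupp.single S (1:ℚ)) ''
      ((A m k w : Set (Finset ℕ)))) => (x : V)) := by
    refine (linearIndepOn_iff_image hinj).1 ?_
    exact (Finsupp.basisSingleOne (R := ℚ) (ι := Finset ℕ)).linearIndependent.comp
      (Subtype.val : {x // x ∈ (A m k w : Set (Finset ℕ))} → Finset ℕ) Subtype.val_injective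
  have h1 := finrank_span_set_eq_card (R := ℚ) hli
  rw [W, h1]
  have h2 : ((fun S : Finset ℕ => Finsupp.single S (1:ℚ)) '' ((A m k w : Set (Finset ℕ)))).toFinset
      = (A m k w).image (fun S => Finsupp.single S (1:ℚ)) := by
    simp [← Finset.coe_image]
  rw [h2, Finset.card_image_of_injOn hinj]

lemma card_A_mono {n k s : ℕ} (hk : 1 ≤ k) (h2s : 2*s < n*k) :
    (A (n+k) k ((∑ i ∈ range k, i) + s)).card ≤ (A (n+k) k ((∑ i ∈ range k, i) + s + 1)).card := by
  set m := n + k with hm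
  set w := (∑ i ∈ range k, i) + s with hw
  have hmap : ∀ x ∈ W m k w, U m x ∈ W m k (w+1) := fun x hx => U_mem_W hx
  set f : W m k w →ₗ[ℚ] W m k (w+1) := (U m).restrict hmap with hf
  have h0 : ∀ z : W m k w, f z = 0 → z = 0 := by
    intro z hz
    have h1 : U m (z : V) = 0 := congrArg Subtype.val hz
    exact Subtype.ext (U_inj hk h2s z.2 h1)
  have hfinj : Function.Injective f := LinearMap.ker_eq_bot.1 (LinearMap.ker_eq_bot'.2 h0)
  haveI : Module.Finite ℚ (W m k (w+1)) :=
    FiniteDimensional.span_of_finite ℚ (((A m k (w+1)).finite_toSet).image _)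
  have hle := LinearMap.finrank_le_finrank_of_injective hfinj
  rw [finrank_W, finrank_W] at hle
  exact hle

lemma refl_mem {n k r : ℕ} (hk : 1 ≤ k) (hr : r ≤ n*k) {S : Finset ℕ}
    (hS : S ∈ A (n+k) k ((∑ i ∈ range k, i) + r)) :
    S.image (fun i => n+k-1-i) ∈ A (n+k) k ((∑ i ∈ range k, i) + (n*k - r)) := by
  rw [mem_A] at hS ⊢
  obtain ⟨hsub, hcard, hsum⟩ := hS
  have hbd : ∀ i ∈ S, i < n + k := fun i hi => Finset.mem_range.1 (hsub hi)
  have hinj : Set.InjOn (fun i => n+k-1-i) (S : Set ℕ) := by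
    intro i hi j hj hij
    have h1 := hbd i hi
    have h2 := hbd j hj
    simp only at hij
    omega
  have h2w : (∑ i ∈ range k, i) * 2 = k * (k-1) := Finset.sum_range_id_mul_two k
  have hkk : k * (n+k-1) = n*k + k*(k-1) := by
    have h1 : n + k - 1 = n + (k-1) := by omega
    rw [h1, Nat.mul_add]
    ring
  refine ⟨?_, ?_, ?_⟩
  · intro x hx
    obtain ⟨i, hi, rfl⟩ := Finset.mem_image.1 hx
    have := hbd i hi
    exact Finset.mem_range.2 (by omega)
  · rw [Finset.card_image_of_injOn hinj, hcard]
  · rw [Finset.sum_image hinj]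
    have hsum2 : ∑ i ∈ S, id (n+k-1-i) + ∑ i ∈ S, id i = k * (n+k-1) := by
      rw [← Finset.sum_add_distrib]
      have : ∀ i ∈ S, id (n+k-1-i) + id i = n+k-1 := by
        intro i hi
        have := hbd i hi
        simp only [id_eq]
        omega
      rw [Finset.sum_congr rfl this, Finset.sum_const, ← hcard]
      ring
    simp only [id_eq] at hsum2 hsum ⊢
    omega

lemma refl_invol {m : ℕ} {S : Finset ℕ} (hsub : S ⊆ range m) :
    (S.image (fun i => m-1-i)).image (fun i => m-1-i) = S := by
  rw [Finset.image_image]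
  have h1 : ∀ x ∈ S, (fun i => m-1-i) ((fun i => m-1-i) x) = id x := by
    intro x hx
    have := Finset.mem_range.1 (hsub hx)
    simp only [Function.comp, id_eq]
    omega
  rw [show ((fun i => m-1-i) ∘ (fun i => m-1-i)) = fun x => (fun i => m-1-i) ((fun i => m-1-i) x) from rfl]
  calc S.image (fun x => m-1-(m-1-x)) = S.image id := Finset.image_congr (fun x hx => by
        have := Finset.mem_range.1 (hsub hx); simp; omega)
    _ = S := Finset.image_id

lemma card_A_symm {n k r : ℕ} (hk : 1 ≤ k) (hr : r ≤ n*k) :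
    (A (n+k) k ((∑ i ∈ range k, i) + r)).card
      = (A (n+k) k ((∑ i ∈ range k, i) + (n*k - r))).card := by
  refine Finset.card_bij' (fun S _ => S.image (fun i => n+k-1-i))
    (fun S _ => S.image (fun i => n+k-1-i)) (fun S hS => refl_mem hk hr hS)
    (fun S hS => ?_) (fun S hS => ?_) (fun S hS => ?_)
  · have h1 := refl_mem hk (Nat.sub_le _ _) hS
    rwa [Nat.sub_sub_self hr] at h1
  · exact refl_invol ((mem_A.1 hS).1)
  · exact refl_invol ((mem_A.1 hS).1)

/-! ### The bijection between partitions in a box and subsets -/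

lemma list_map_getD (l : List ℕ) : (List.range l.length).map (fun j => l.getD j 0) = l := by
  apply List.ext_getElem
  · simp
  · intro i h1 h2
    simp only [List.getElem_map, List.getElem_range]
    rw [List.getD_eq_getElem l 0 h2]

lemma sum_getD (l : List ℕ) : ∑ j ∈ range l.length, l.getD j 0 = l.sum := by
  induction l with
  | nil => simp
  | cons x xs ih =>
    rw [List.length_cons, Finset.sum_range_succ', List.sum_cons]
    simp only [List.getD_cons_succ, List.getD_cons_zero]
    rw [ih]; ring

lemma sorted_getD_lt {s : List ℕ} (hs : List.Pairwise (· < ·) s) :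
    ∀ d i, i + d < s.length → s.getD i 0 + d ≤ s.getD (i+d) 0 := by
  intro d
  induction d with
  | zero => intro i h; simp
  | succ d ih =>
    intro i h
    have h1 : s.getD (i+d) 0 < s.getD (i+d+1) 0 := by
      rw [List.getD_eq_getElem s 0 (by omega), List.getD_eq_getElem s 0 (by omega)]
      exact List.pairwise_iff_getElem.1 hs _ _ _ _ (by omega)
    have h2 := ih i (by omega)
    have he : i + (d+1) = i + d + 1 := by omega
    rw [he]
    omega

lemma sorted_getD_le {s : List ℕ} (hs : List.Pairwise (· ≤ ·) s) :
    ∀ i j, i ≤ j → j < s.length → s.getD i 0 ≤ s.getD j 0 := by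
  intro i j hij hj
  rcases Nat.eq_or_lt_of_le hij with rfl | hlt
  · rfl
  · rw [List.getD_eq_getElem s 0 (by omega), List.getD_eq_getElem s 0 hj]
    exact List.pairwise_iff_getElem.1 hs _ _ _ _ hlt

lemma sort_image_strictmono {k : ℕ} {f : ℕ → ℕ}
    (hf : ∀ i j, i < j → j < k → f i < f j) :
    Finset.sort ((range k).image f) (· ≤ ·) = (List.range k).map f := by
  have hinj : Set.InjOn f (range k : Set ℕ) := by
    intro i hi j hj hij
    simp only [Finset.coe_range, Set.mem_Iio] at hi hj
    by_contra hne
    rcases Nat.lt_or_ge i j with h | h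
    · exact absurd hij (Nat.ne_of_lt (hf i j h hj))
    · have : j < i := by omega
      exact absurd hij.symm (Nat.ne_of_lt (hf j i this hi))
  apply fun hp h1 h2 => List.Perm.eq_of_pairwise' (r := fun x1 x2 : ℕ => x1 ≤ x2) h1 h2 hp
  · rw [← Multiset.coe_eq_coe, Finset.sort_eq]
    have h1 : ((range k).image f).val = Multiset.map f (range k).val :=
      Finset.image_val_of_injOn hinj
    rw [h1]
    have h2 : (range k).val = ↑(List.range k) := rfl
    rw [h2, Multiset.map_coe]
  · exact Finset.pairwise_sort _ _
  · rw [List.pairwise_iff_getElem]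
    intro i j hi hj hij
    simp only [List.getElem_map, List.getElem_range]
    simp only [List.length_map, List.length_range] at hi hj
    exact le_of_lt (hf i j hij hj)

/-- padding a partition with zeros to exactly `k` parts -/
def pad (k : ℕ) (μ : Multiset ℕ) : Multiset ℕ := μ + Multiset.replicate (k - μ.card) 0

/-- partition → subset -/
noncomputable def phi (k : ℕ) (μ : Multiset ℕ) : Finset ℕ :=
  (range k).image (fun j => (Multiset.sort (pad k μ) (· ≤ ·)).getD j 0 + j)

/-- subset → partition -/
def psi (k : ℕ) (S : Finset ℕ) : Multiset ℕ :=
  Multiset.filter (fun x => 0 < x)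
    (((List.range k).map (fun j => (Finset.sort S (fun x1 x2 : ℕ => x1 ≤ x2)).getD j 0 - j) :
      List ℕ) : Multiset ℕ)

section bijlemmas

variable {n k r : ℕ}

/-- the property defining `prnk` -/
def P (n k r : ℕ) (μ : Multiset ℕ) : Prop :=
  IsPtn μ ∧ μ.sum = r ∧ μ.card ≤ k ∧ ∀ x ∈ μ, x ≤ n

lemma pad_card {μ : Multiset ℕ} (h : μ.card ≤ k) : (pad k μ).card = k := by
  simp only [pad, Multiset.card_add, Multiset.card_replicate]; omega

lemma pad_sum (μ : Multiset ℕ) : (pad k μ).sum = μ.sum := by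
  simp [pad, Multiset.sum_replicate]

lemma pad_mem {μ : Multiset ℕ} {x : ℕ} (hx : x ∈ pad k μ) : x ∈ μ ∨ x = 0 := by
  rcases Multiset.mem_add.1 hx with h | h
  · exact Or.inl h
  · exact Or.inr (Multiset.eq_of_mem_replicate h)

lemma phi_mem {μ : Multiset ℕ} (hμ : P n k r μ) :
    phi k μ ∈ A (n+k) k ((∑ i ∈ range k, i) + r) := by
  obtain ⟨hpos, hsum, hcard, hle⟩ := hμ
  rw [mem_A]
  unfold phi
  set l : List ℕ := Multiset.sort (pad k μ) (· ≤ ·) with hl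
  have hlen : l.length = k := by rw [hl, Multiset.length_sort, pad_card hcard]
  have hsorted : List.Pairwise (· ≤ ·) l := Multiset.pairwise_sort _ _
  have hmeml : ∀ x ∈ l, x ≤ n := by
    intro x hx
    have : x ∈ pad k μ := by rw [← Multiset.mem_sort (· ≤ ·)]; exact hx
    rcases pad_mem this with h | h
    · exact hle x h
    · omega
  have hlsum : l.sum = r := by
    have h1 : (↑l : Multiset ℕ) = pad k μ := Multiset.sort_eq _ _
    have h2 : (↑l : Multiset ℕ).sum = l.sum := Multiset.sum_coe l
    rw [← h2, h1, pad_sum, hsum]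
  have hmono : ∀ i j, i < j → j < k → l.getD i 0 + i < l.getD j 0 + j := by
    intro i j hij hj
    have := sorted_getD_le hsorted i j (le_of_lt hij) (by omega)
    omega
  refine ⟨?_, ?_, ?_⟩
  · intro x hx
    obtain ⟨j, hj, rfl⟩ := Finset.mem_image.1 hx
    rw [Finset.mem_range] at hj
    have h1 : l.getD j 0 ≤ n := by
      apply hmeml
      rw [List.getD_eq_getElem l 0 (by omega)]
      exact List.getElem_mem _
    exact Finset.mem_range.2 (by omega)
  · rw [Finset.card_image_of_injOn, Finset.card_range]
    intro i hi j hj hij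
    simp only [Finset.coe_range, Set.mem_Iio] at hi hj
    by_contra hne
    rcases Nat.lt_or_ge i j with h | h
    · exact absurd hij (Nat.ne_of_lt (hmono i j h hj))
    · exact absurd hij.symm (Nat.ne_of_lt (hmono j i (by omega) hi))
  · rw [Finset.sum_image]
    · have h1 : ∑ j ∈ range k, (l.getD j 0 + j) = (∑ j ∈ range k, l.getD j 0) + ∑ j ∈ range k, j :=
        Finset.sum_add_distrib
      have h2 : ∑ j ∈ range k, l.getD j 0 = l.sum := by rw [← hlen]; exact sum_getD l
      simp only [id_eq]
      rw [h1, h2, hlsum]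
      omega
    · intro i hi j hj hij
      rw [Finset.mem_coe, Finset.mem_range] at hi hj
      by_contra hne
      rcases Nat.lt_or_ge i j with h | h
      · exact absurd hij (Nat.ne_of_lt (hmono i j h hj))
      · exact absurd hij.symm (Nat.ne_of_lt (hmono j i (by omega) hi))

lemma sum_map_range (k : ℕ) (g : ℕ → ℕ) : ((List.range k).map g).sum = ∑ j ∈ range k, g j := by
  have h1 := sum_getD ((List.range k).map g)
  rw [List.length_map, List.length_range] at h1
  rw [← h1]
  refine Finset.sum_congr rfl fun j hj => ?_
  rw [Finset.mem_range] at hj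
  rw [List.getD_eq_getElem _ 0 (by simp only [List.length_map, List.length_range]; omega),
    List.getElem_map, List.getElem_range]

lemma psi_mem {S : Finset ℕ} (hS : S ∈ A (n+k) k ((∑ i ∈ range k, i) + r)) : P n k r (psi k S) := by
  rw [mem_A] at hS
  obtain ⟨hsub, hcard, hsum⟩ := hS
  unfold psi P
  set s : List ℕ := Finset.sort S (fun x1 x2 : ℕ => x1 ≤ x2) with hsdef
  have hlen : s.length = k := by rw [hsdef, Finset.length_sort, hcard]
  have hsort : List.Pairwise (· < ·) s := (Finset.sortedLT_sort S).pairwise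
  have hmem : ∀ j, j < k → s.getD j 0 ∈ S := by
    intro j hj
    rw [List.getD_eq_getElem s 0 (by omega)]
    rw [← Finset.mem_sort (fun x1 x2 : ℕ => x1 ≤ x2), ← hsdef]
    exact List.getElem_mem _
  have hjle : ∀ j, j < k → j ≤ s.getD j 0 := by
    intro j hj
    have h1 := sorted_getD_lt hsort j 0 (by omega)
    simp only [Nat.zero_add] at h1
    omega
  have hub : ∀ j, j < k → s.getD j 0 ≤ n + j := by
    intro j hj
    have h1 := sorted_getD_lt hsort (k-1-j) j (by omega)
    have he : j + (k-1-j) = k-1 := by omega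
    rw [he] at h1
    have h2 := hmem (k-1) (by omega)
    have h3 := Finset.mem_range.1 (hsub h2)
    omega
  set L : List ℕ := (List.range k).map (fun j => s.getD j 0 - j) with hL
  have hcL : (L : Multiset ℕ).card = k := by
    rw [Multiset.coe_card, hL, List.length_map, List.length_range]
  have hsumL : (L : Multiset ℕ).sum = r := by
    rw [Multiset.sum_coe, hL, sum_map_range]
    have h1 : ∑ j ∈ range k, (s.getD j 0 - j) + ∑ j ∈ range k, j = ∑ j ∈ range k, s.getD j 0 := by
      rw [← Finset.sum_add_distrib]
      refine Finset.sum_congr rfl fun j hj => ?_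
      rw [Finset.mem_range] at hj
      have := hjle j hj
      omega
    have h2 : ∑ j ∈ range k, s.getD j 0 = s.sum := by rw [← hlen]; exact sum_getD s
    have h3 : s.sum = S.sum id := by
      have ha : (↑s : Multiset ℕ) = S.val := Finset.sort_eq _ _
      have hb : (↑s : Multiset ℕ).sum = s.sum := Multiset.sum_coe s
      have hc : S.sum id = S.val.sum := by
        rw [Finset.sum]; simp
      rw [hc, ← ha, hb]
    omega
  refine ⟨fun x hx => (Multiset.mem_filter.1 hx).2, ?_, ?_, ?_⟩
  · -- sum
    have hsplit := Multiset.filter_add_not (fun x => 0 < x) (L : Multiset ℕ)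
    have h0 : (Multiset.filter (fun x => ¬ 0 < x) (L : Multiset ℕ)).sum = 0 := by
      apply Multiset.sum_eq_zero
      intro x hx
      have := (Multiset.mem_filter.1 hx).2
      omega
    have h1 := congrArg Multiset.sum hsplit
    rw [Multiset.sum_add, h0, add_zero] at h1
    rw [h1, hsumL]
  · -- card
    calc (Multiset.filter (fun x => 0 < x) (L : Multiset ℕ)).card
        ≤ (L : Multiset ℕ).card := Multiset.card_le_card (Multiset.filter_le _ _)
      _ = k := hcL
  · -- bound
    intro x hx
    have hx2 := Multiset.mem_filter.1 hx
    have hx3 : x ∈ (L : Multiset ℕ) := hx2.1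
    rw [Multiset.mem_coe, hL, List.mem_map] at hx3
    obtain ⟨j, hj, rfl⟩ := hx3
    rw [List.mem_range] at hj
    have := hub j hj
    omega

lemma psi_phi {μ : Multiset ℕ} (hμ : P n k r μ) : psi k (phi k μ) = μ := by
  obtain ⟨hpos, hsum, hcard, hle⟩ := hμ
  unfold psi phi
  set l : List ℕ := Multiset.sort (pad k μ) (· ≤ ·) with hl
  have hlen : l.length = k := by rw [hl, Multiset.length_sort, pad_card hcard]
  have hsorted : List.Pairwise (· ≤ ·) l := Multiset.pairwise_sort _ _
  have hmono : ∀ i j, i < j → j < k → l.getD i 0 + i < l.getD j 0 + j := by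
    intro i j hij hj
    have := sorted_getD_le hsorted i j (le_of_lt hij) (by omega)
    omega
  have hsort_eq : Finset.sort
      ((range k).image (fun j => l.getD j 0 + j)) (fun x1 x2 : ℕ => x1 ≤ x2) = (List.range k).map (fun j => l.getD j 0 + j) :=
    sort_image_strictmono hmono
  rw [hsort_eq]
  have hmapeq : (List.range k).map
      (fun j => ((List.range k).map (fun j => l.getD j 0 + j)).getD j 0 - j)
      = (List.range k).map (fun j => l.getD j 0) := by
    apply List.map_congr_left
    intro j hj
    rw [List.mem_range] at hj
    rw [List.getD_eq_getElem _ 0 (by simp only [List.length_map, List.length_range]; omega),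
      List.getElem_map, List.getElem_range]
    omega
  rw [hmapeq]
  have hll : (List.range k).map (fun j => l.getD j 0) = l := by
    rw [← hlen]; exact list_map_getD l
  rw [hll]
  have hcoe : (↑l : Multiset ℕ) = pad k μ := Multiset.sort_eq _ _
  rw [hcoe]
  unfold pad
  rw [Multiset.filter_add]
  have h1 : Multiset.filter (fun x => 0 < x) μ = μ := Multiset.filter_eq_self.2 hpos
  have h2 : Multiset.filter (fun x => 0 < x) (Multiset.replicate (k - μ.card) 0) = 0 := by
    rw [Multiset.filter_eq_nil]
    intro a ha
    rw [Multiset.eq_of_mem_replicate ha]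
    omega
  rw [h1, h2, add_zero]

lemma phi_psi {S : Finset ℕ} (hS : S ∈ A (n+k) k ((∑ i ∈ range k, i) + r)) :
    phi k (psi k S) = S := by
  rw [mem_A] at hS
  obtain ⟨hsub, hcard, hsum⟩ := hS
  unfold psi phi
  set s : List ℕ := Finset.sort S (fun x1 x2 : ℕ => x1 ≤ x2) with hsdef
  have hlen : s.length = k := by rw [hsdef, Finset.length_sort, hcard]
  have hsort : List.Pairwise (· < ·) s := (Finset.sortedLT_sort S).pairwise
  have hmem : ∀ j, j < k → s.getD j 0 ∈ S := by
    intro j hj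
    rw [List.getD_eq_getElem s 0 (by omega)]
    rw [← Finset.mem_sort (fun x1 x2 : ℕ => x1 ≤ x2), ← hsdef]
    exact List.getElem_mem _
  have hjle : ∀ j, j < k → j ≤ s.getD j 0 := by
    intro j hj
    have h1 := sorted_getD_lt hsort j 0 (by omega)
    simp only [Nat.zero_add] at h1
    omega
  set L : List ℕ := (List.range k).map (fun j => s.getD j 0 - j) with hL
  have hlenL : L.length = k := by rw [hL, List.length_map, List.length_range]
  have hgetL : ∀ j, j < k → L.getD j 0 = s.getD j 0 - j := by
    intro j hj
    rw [hL, List.getD_eq_getElem _ 0 (by simp only [List.length_map, List.length_range]; omega),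
      List.getElem_map, List.getElem_range]
  -- pad of the filtered multiset is L
  have hpad : pad k (Multiset.filter (fun x => 0 < x) (L : Multiset ℕ)) = (L : Multiset ℕ) := by
    unfold pad
    have hsplit := Multiset.filter_add_not (fun x => 0 < x) (L : Multiset ℕ)
    have hcL : (L : Multiset ℕ).card = k := by rw [Multiset.coe_card, hlenL]
    have hcadd := congrArg Multiset.card hsplit
    rw [Multiset.card_add, hcL] at hcadd
    have hrep : Multiset.replicate
        (k - (Multiset.filter (fun x => 0 < x) (L : Multiset ℕ)).card) 0
        = Multiset.filter (fun x => ¬ 0 < x) (L : Multiset ℕ) := by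
      symm
      rw [Multiset.eq_replicate]
      constructor
      · omega
      · intro b hb
        have := (Multiset.mem_filter.1 hb).2
        omega
    rw [hrep, hsplit]
  rw [hpad]
  -- sorting L gives back L
  have hsortL : Multiset.sort (L : Multiset ℕ) (· ≤ ·) = L := by
    apply fun hp h1 h2 => List.Perm.eq_of_pairwise' (r := fun x1 x2 : ℕ => x1 ≤ x2) h1 h2 hp
    · rw [← Multiset.coe_eq_coe, Multiset.sort_eq]
    · exact Multiset.pairwise_sort _ _
    · rw [List.pairwise_iff_getElem]
      intro i j hi hj hij
      rw [hlenL] at hi hj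
      have h1 := sorted_getD_lt hsort (j-i) i (by omega)
      have he : i + (j-i) = j := by omega
      rw [he] at h1
      have h2 := hjle i (by omega)
      have h3 := hjle j (by omega)
      have g1 : L[i] = s.getD i 0 - i := by
        rw [← List.getD_eq_getElem L 0, hgetL i (by omega)]
      have g2 : L[j] = s.getD j 0 - j := by
        rw [← List.getD_eq_getElem L 0, hgetL j (by omega)]
      rw [g1, g2]
      omega
  rw [hsortL]
  -- the image recovers S
  have himg : ∀ j ∈ range k, L.getD j 0 + j = s.getD j 0 := by
    intro j hj
    rw [Finset.mem_range] at hj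
    rw [hgetL j hj]
    have := hjle j hj
    omega
  rw [Finset.image_congr himg]
  ext x
  simp only [Finset.mem_image, Finset.mem_range]
  constructor
  · rintro ⟨j, hj, rfl⟩
    exact hmem j hj
  · intro hx
    have hx2 : x ∈ s := by
      rw [hsdef, Finset.mem_sort (fun x1 x2 : ℕ => x1 ≤ x2)]; exact hx
    obtain ⟨i, hi, hieq⟩ := List.mem_iff_getElem.1 hx2
    refine ⟨i, by omega, ?_⟩
    rw [List.getD_eq_getElem s 0 hi, hieq]

lemma prnk_eq_card_A (n k r : ℕ) :
    prnk n k r = (A (n+k) k ((∑ i ∈ range k, i) + r)).card := by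
  rw [prnk, ← Nat.card_eq_finsetCard]
  apply Nat.card_congr
  exact {
    toFun := fun μ => ⟨phi k μ.1, phi_mem μ.2⟩
    invFun := fun S => ⟨psi k S.1, psi_mem S.2⟩
    left_inv := fun μ => Subtype.ext (psi_phi μ.2)
    right_inv := fun S => Subtype.ext (phi_psi S.2) }

end bijlemmas

end Sylv

/-- Sylvester's unimodality theorem: the coefficients of the Gaussian binomial coefficient
form a symmetric and unimodal sequence. -/
theorem sylvester_unimodality (n k : ℕ) (hn : 1 ≤ n) (hk : 1 ≤ k) :
    (∀ r ≤ n * k, prnk n k r = prnk n k (n * k - r)) ∧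
    (∀ r : ℕ, 1 ≤ r → 2 * r ≤ n * k → prnk n k (r - 1) ≤ prnk n k r) := by
  constructor
  · intro r hr
    rw [Sylv.prnk_eq_card_A, Sylv.prnk_eq_card_A]
    exact Sylv.card_A_symm hk hr
  · intro r hr1 hr2
    rw [Sylv.prnk_eq_card_A, Sylv.prnk_eq_card_A]
    have h1 := Sylv.card_A_mono (n := n) (k := k) (s := r - 1) hk (by omega)
    have h2 : (∑ i ∈ Finset.range k, i) + (r-1) + 1 = (∑ i ∈ Finset.range k, i) + r := by omega
    rw [h2] at h1
    exact h1
end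

section
/- Let a ≥ 0 and b ≥ 1 be integers, let μ ⊢ b be a partition, and let j be any part size of μ (i.e., m_j(μ) ≥ 1). Set a* := (a+2)j − 2(μ'_1 + ⋯ + μ'_j) and b* := m_j(μ). Then a* · b* ≤ a · b, with equality if and only if μ = (b) (the one-row partition). -/
open Polynomial

/-- The `j`-th part of the conjugate partition, `μ'_j`. -/
def conjPart (μ : Multiset ℕ) (j : ℕ) : ℕ := (μ.filter (fun x => j ≤ x)).card

/-- `Q_j(μ) = μ'_1 + ⋯ + μ'_j`. -/
def Qsum (μ : Multiset ℕ) (j : ℕ) : ℕ := ∑ x ∈ Finset.Icc 1 j, conjPart μ x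


theorem KOH_child_product_bound (a b : ℕ) (hb : 1 ≤ b)
    (μ : Multiset ℕ) (hptn : IsPtn μ) (hsum : μ.sum = b)
    (j : ℕ) (hj : 1 ≤ μ.count j) :
    ((((a : ℤ) + 2) * j - 2 * (Qsum μ j : ℤ)) * (μ.count j : ℤ) ≤ (a : ℤ) * b) ∧
    (((((a : ℤ) + 2) * j - 2 * (Qsum μ j : ℤ)) * (μ.count j : ℤ) = (a : ℤ) * b) ↔
      μ = ({b} : Multiset ℕ)) := by
  have hjmem : j ∈ μ := Multiset.count_pos.mp hj
  have hjpos : 0 < j := hptn j hjmem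
  set m := μ.count j with hm
  -- each conjugate part with index ≤ j is at least m
  have hconj_m : ∀ x ∈ Finset.Icc 1 j, m ≤ conjPart μ x := by
    intro x hx
    have hxj : x ≤ j := (Finset.mem_Icc.mp hx).2
    have h1 : m = (μ.filter (fun y => x ≤ y)).count j := by
      rw [Multiset.count_filter]
      simp [hxj]
      exact hm
    rw [h1]
    exact Multiset.count_le_card _ _
  have hQ_ge : j * m ≤ Qsum μ j := by
    calc j * m = ∑ _x ∈ Finset.Icc 1 j, m := by
          rw [Finset.sum_const, Nat.card_Icc]; simp [mul_comm]
      _ ≤ Qsum μ j := Finset.sum_le_sum hconj_m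
  have hQ_ge_j : j ≤ Qsum μ j := le_trans (by nlinarith) hQ_ge
  -- b ≥ j * m
  have hrep : Multiset.replicate m j ≤ μ := Multiset.le_count_iff_replicate_le.mp le_rfl
  have hb_ge : j * m ≤ b := by
    obtain ⟨t, ht⟩ := Multiset.le_iff_exists_add.mp hrep
    have h2 : μ.sum = m * j + t.sum := by
      rw [ht, Multiset.sum_add, Multiset.sum_replicate, smul_eq_mul]
    rw [mul_comm]
    omega
  have hmain : ((a : ℤ) + 2) * j - 2 * (Qsum μ j : ℤ) ≤ (a : ℤ) * j :=
    by
      have : (j : ℤ) ≤ (Qsum μ j : ℤ) := by exact_mod_cast hQ_ge_j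
      linarith
  -- key decomposition over ℤ
  have hQZ : (j : ℤ) * m ≤ (Qsum μ j : ℤ) := by exact_mod_cast hQ_ge
  have hbZ : (j : ℤ) * m ≤ (b : ℤ) := by exact_mod_cast hb_ge
  have hmZ : (1 : ℤ) ≤ (m : ℤ) := by exact_mod_cast hj
  have haZ : (0 : ℤ) ≤ (a : ℤ) := Int.natCast_nonneg a
  have hineq : (((a : ℤ) + 2) * j - 2 * (Qsum μ j : ℤ)) * (m : ℤ) ≤ (a : ℤ) * b := by
    nlinarith [mul_le_mul_of_nonneg_left hbZ haZ, hQZ, hmZ]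
  refine ⟨hineq, ?_, ?_⟩
  · -- equality implies μ = {b}
    intro heq
    -- From equality: a*(b - j*m) + 2*m*(Q - j) = 0, both summands nonneg
    have hQj : Qsum μ j = j := by
      by_contra hne
      have h1 : (j : ℤ) < (Qsum μ j : ℤ) := by
        have := lt_of_le_of_ne hQ_ge_j (fun h => hne h.symm)
        exact_mod_cast this
      nlinarith [mul_le_mul_of_nonneg_left hbZ haZ, hQZ, hmZ]
    -- Q = j forces conjPart μ 1 = 1, i.e. μ has one part
    have h1mem : (1 : ℕ) ∈ Finset.Icc 1 j := Finset.mem_Icc.mpr ⟨le_rfl, hjpos⟩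
    have hsplit : conjPart μ 1 + ∑ x ∈ (Finset.Icc 1 j).erase 1, conjPart μ x = Qsum μ j :=
      Finset.add_sum_erase _ _ h1mem
    have herase_ge : j - 1 ≤ ∑ x ∈ (Finset.Icc 1 j).erase 1, conjPart μ x := by
      have hcard : ((Finset.Icc 1 j).erase 1).card = j - 1 := by
        rw [Finset.card_erase_of_mem h1mem, Nat.card_Icc]; omega
      calc j - 1 = ∑ _x ∈ (Finset.Icc 1 j).erase 1, 1 := by
            rw [Finset.sum_const, smul_eq_mul, mul_one, hcard]
        _ ≤ _ := Finset.sum_le_sum (fun x hx =>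
            le_trans hj (hconj_m x (Finset.mem_of_mem_erase hx)))
    have hcP1le : conjPart μ 1 ≤ 1 := by omega
    have hcard1 : Multiset.card μ ≤ 1 := by
      have : μ.filter (fun x => 1 ≤ x) = μ := by
        rw [Multiset.filter_eq_self]
        intro x hx; exact hptn x hx
      unfold conjPart at hcP1le
      rwa [this] at hcP1le
    have hcard1' : Multiset.card μ = 1 := by
      have : 1 ≤ Multiset.card μ := Multiset.card_pos_iff_exists_mem.mpr ⟨j, hjmem⟩
      omega
    obtain ⟨c, hc⟩ := Multiset.card_eq_one.mp hcard1'
    have : c = b := by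
      rw [hc] at hsum; simpa using hsum
    rw [hc, this]
  · -- μ = {b} implies equality
    intro hμ
    subst hμ
    have hjb : j = b := by
      have := Multiset.mem_singleton.mp hjmem
      exact this
    subst hjb
    have hcount : ({j} : Multiset ℕ).count j = 1 := by simp
    have hQ : Qsum ({j} : Multiset ℕ) j = j := by
      unfold Qsum
      have : ∀ x ∈ Finset.Icc 1 j, conjPart ({j} : Multiset ℕ) x = 1 := by
        intro x hx
        have hxj : x ≤ j := (Finset.mem_Icc.mp hx).2
        unfold conjPart
        rw [Multiset.filter_singleton]
        simp [hxj]
      rw [Finset.sum_congr rfl this, Finset.sum_const, Nat.card_Icc]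
      simp
    have hmint : (m : ℤ) = 1 := by exact_mod_cast hcount
    rw [hQ, hmint]
    ring
end
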